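/- arXiv:2001.03022 — 5 statements merged into one kernel-verified Lean document; each statement's English description precedes it below -/
import Mathlib

section
/- Let f ∈ H²(ℝᴺ) and Nα > 8, with σ_c = (8-(N-4)α)/(Nα-8). Suppose the sharp Gagliardo–Nirenberg inequality ‖f‖^{α+2}_{L^{α+2}} ≤ C_opt ‖Δf‖^{Nα/4}_{L²}‖f‖^{(8-(N-4)α)/4}_{L²} holds with C_opt = (4(α+2)/(Nα))·(‖ΔQ‖_{L²}‖Q‖^{σ_c}_{L²})^{-(Nα-8)/4}, and that for some ρ ∈ (0,1), ‖Δf‖_{L²}‖f‖^{σ_c}_{L²} < (1-ρ)‖ΔQ‖_{L²}‖Q‖^{σ_c}_{L²}. Then K₀(f) := ‖Δf‖²_{L²} - (Nα/(4(α+2)))‖f‖^{α+2}_{L^{α+2}} ≥ ν‖f‖^{α+2}_{L^{α+2}}, where ν = (Nα[1-(1-ρ)^{(Nα-8)/4}])/(4(α+2)(1-ρ)^{(Nα-8)/4}) > 0. -/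
/-- Coercivity of the virial functional below the ground state threshold.
Here `a` denotes ‖Δf‖_{L²}, `b` denotes ‖f‖_{L²}, `p` denotes ‖f‖_{L^{α+2}}^{α+2},
`ΔQ` denotes ‖ΔQ‖_{L²}, and `Q2` denotes ‖Q‖_{L²}. -/
theorem virial_coercivity (N : ℕ) (α σc ρ ΔQ Q2 a b p Copt : ℝ)
    (hN : 2 ≤ N) (h8 : 8 < (N : ℝ) * α) (hα2 : 5 ≤ N → α < 8 / ((N : ℝ) - 4))
    (hσ : σc = (8 - ((N : ℝ) - 4) * α) / ((N : ℝ) * α - 8))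
    (ha : 0 ≤ a) (hb : 0 ≤ b) (hp : 0 ≤ p) (hΔQ : 0 < ΔQ) (hQ2 : 0 < Q2)
    (hρ : ρ ∈ Set.Ioo (0 : ℝ) 1)
    (hCopt : Copt = (4 * (α + 2) / ((N : ℝ) * α)) *
      (ΔQ * Q2 ^ σc) ^ (-(((N : ℝ) * α - 8) / 4)))
    (hGN : p ≤ Copt * a ^ ((N : ℝ) * α / 4) * b ^ ((8 - ((N : ℝ) - 4) * α) / 4))
    (hsub : a * b ^ σc < (1 - ρ) * (ΔQ * Q2 ^ σc)) :
    0 < ((N : ℝ) * α * (1 - (1 - ρ) ^ (((N : ℝ) * α - 8) / 4))) /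
        (4 * (α + 2) * (1 - ρ) ^ (((N : ℝ) * α - 8) / 4)) ∧
    (((N : ℝ) * α * (1 - (1 - ρ) ^ (((N : ℝ) * α - 8) / 4))) /
        (4 * (α + 2) * (1 - ρ) ^ (((N : ℝ) * α - 8) / 4))) * p ≤
      a ^ 2 - ((N : ℝ) * α / (4 * (α + 2))) * p := by
  obtain ⟨hρ0, hρ1⟩ := hρ
  have hN' : (2 : ℝ) ≤ (N : ℝ) := by exact_mod_cast hN
  have hα : 0 < α := by nlinarith
  have hA2 : (0 : ℝ) < α + 2 := by linarith
  have hNα : (0 : ℝ) < (N : ℝ) * α := by linarith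
  set s : ℝ := ((N : ℝ) * α - 8) / 4 with hs_def
  have hs : 0 < s := div_pos (by linarith) (by norm_num)
  have h1ρ : 0 < 1 - ρ := by linarith
  set c : ℝ := (1 - ρ) ^ s with hc_def
  have hc0 : 0 < c := Real.rpow_pos_of_pos h1ρ s
  have hc1 : c < 1 := Real.rpow_lt_one h1ρ.le (by linarith) hs
  have hX : 0 < ΔQ * Q2 ^ σc := mul_pos hΔQ (Real.rpow_pos_of_pos hQ2 σc)
  have habσ : 0 ≤ a * b ^ σc := mul_nonneg ha (Real.rpow_nonneg hb σc)
  have hCopt0 : 0 < Copt := by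
    rw [hCopt]
    exact mul_pos (div_pos (by linarith) hNα) (Real.rpow_pos_of_pos hX _)
  -- exponent identities
  have hσs : (8 - ((N : ℝ) - 4) * α) / 4 = σc * s := by
    have h8' : (N:ℝ)*α - 8 ≠ 0 := by linarith
    rw [hσ, hs_def]
    field_simp
  have hexp : a ^ ((N : ℝ) * α / 4) = a ^ (2 : ℝ) * a ^ s := by
    rw [← Real.rpow_add' ha (by positivity)]
    congr 1
    rw [hs_def]; ring
  have hbσ : b ^ ((8 - ((N : ℝ) - 4) * α) / 4) = (b ^ σc) ^ s := by
    rw [hσs, Real.rpow_mul hb]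
  -- C_opt times X^s
  have hCX : Copt * (ΔQ * Q2 ^ σc) ^ s = 4 * (α + 2) / ((N : ℝ) * α) := by
    have hXs : (ΔQ * Q2 ^ σc) ^ s ≠ 0 := (Real.rpow_pos_of_pos hX s).ne'
    rw [hCopt, Real.rpow_neg hX.le]
    field_simp
  -- main estimate
  have key : p ≤ 4 * (α + 2) / ((N : ℝ) * α) * c * a ^ (2 : ℝ) := by
    calc p ≤ Copt * a ^ ((N : ℝ) * α / 4) * b ^ ((8 - ((N : ℝ) - 4) * α) / 4) := hGN
      _ = Copt * a ^ (2 : ℝ) * (a * b ^ σc) ^ s := by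
          rw [hexp, hbσ, Real.mul_rpow ha (Real.rpow_nonneg hb σc)]; ring
      _ ≤ Copt * a ^ (2 : ℝ) * ((1 - ρ) * (ΔQ * Q2 ^ σc)) ^ s := by
          have := Real.rpow_le_rpow habσ hsub.le hs.le
          exact mul_le_mul_of_nonneg_left this
            (mul_nonneg hCopt0.le (Real.rpow_nonneg ha 2))
      _ = Copt * a ^ (2 : ℝ) * (c * (ΔQ * Q2 ^ σc) ^ s) := by
          rw [Real.mul_rpow h1ρ.le hX.le]
      _ = 4 * (α + 2) / ((N : ℝ) * α) * c * a ^ (2 : ℝ) := by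
          rw [show Copt * a ^ (2:ℝ) * (c * (ΔQ * Q2 ^ σc) ^ s)
              = Copt * (ΔQ * Q2 ^ σc) ^ s * c * a ^ (2:ℝ) by ring, hCX]
  have ha2 : a ^ (2 : ℝ) = a ^ 2 := by
    rw [show (2 : ℝ) = ((2 : ℕ) : ℝ) by norm_num, Real.rpow_natCast]
  rw [ha2] at key
  have h1 : (N : ℝ) * α * p ≤ 4 * (α + 2) * c * a ^ 2 := by
    have h := mul_le_mul_of_nonneg_left key hNα.le
    have heq : (N : ℝ) * α * (4 * (α + 2) / ((N : ℝ) * α) * c * a ^ 2)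
        = 4 * (α + 2) * c * a ^ 2 := by field_simp
    rw [heq] at h
    linarith
  constructor
  · exact div_pos (mul_pos hNα (by linarith)) (mul_pos (by linarith) hc0)
  · have hd : (0 : ℝ) < 4 * (α + 2) * c := mul_pos (by linarith) hc0
    rw [div_mul_eq_mul_div, div_le_iff₀ hd]
    have h2 : (a ^ 2 - (N : ℝ) * α / (4 * (α + 2)) * p) * (4 * (α + 2) * c)
        = 4 * (α + 2) * c * a ^ 2 - (N : ℝ) * α * c * p := by
      field_simp
    rw [h2]
    nlinarith [h1]
end

section
/- (Radial Sobolev embedding) Let N ≥ 2. There exists C = C(N) > 0 such that for all radially symmetric f ∈ H¹(ℝᴺ) and all x ≠ 0, |x|^{(N-1)/2}|f(x)| ≤ C‖∇f‖^{1/2}_{L²}‖f‖^{1/2}_{L²}. -/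
/-!
Write `f x = g ‖x‖`. Polar coordinates turn `∫ f²` and `∫ |f| ‖∇f‖` into integrals
`∫ s ^ (N-1) (⋯) ds` over `(0, ∞)`, up to the area `N · |B(0,1)|` of the unit sphere, and
`|g'| ≤ ‖∇f‖`. The function `h s = s ^ (N-1) g(s)²` is integrable at infinity and satisfies
`h' ≥ -2 s ^ (N-1) |g| ‖∇f‖`, so `h r ≤ 2 ∫_r^∞ s ^ (N-1) |g| ‖∇f‖ ds`, which is at most a
constant times `∫ |f| ‖∇f‖ ≤ ‖f‖₂ ‖∇f‖₂` (Cauchy–Schwarz).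
-/

open MeasureTheory Set Metric Module

theorem le_integral_Ioi_of_neg_le_deriv {h h' k : ℝ → ℝ} {a : ℝ}
    (hcont : ContinuousOn h (Ici a)) (hderiv : ∀ x ∈ Ioi a, HasDerivAt h (h' x) x)
    (hle : ∀ x ∈ Ioi a, -k x ≤ h' x) (hk0 : ∀ x ∈ Ioi a, 0 ≤ k x)
    (hh : IntegrableOn h (Ioi a)) (hk : IntegrableOn k (Ioi a)) :
    h a ≤ ∫ x in Ioi a, k x := by
  by_contra! hlt
  have hbound : ∀ R ∈ Ioi a, h a - ∫ x in Ioi a, k x ≤ h R := fun R hR => by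
    have hFTC : -h R - -h a ≤ ∫ x in a..R, k x :=
      intervalIntegral.sub_le_integral_of_hasDeriv_right_of_le hR.le
        (hcont.mono Icc_subset_Ici_self).neg
        (fun x hx => (hderiv x hx.1).neg.hasDerivWithinAt)
        ((integrableOn_Icc_iff_integrableOn_Ioc (by simp)).2 (hk.mono_set Ioc_subset_Ioi_self))
        (fun x hx => neg_le.1 (hle x hx.1))
    have htail : ∫ x in a..R, k x ≤ ∫ x in Ioi a, k x := by
      rw [intervalIntegral.integral_of_le hR.le]
      exact setIntegral_mono_set hk ((ae_restrict_iff' measurableSet_Ioi).2 (.of_forall hk0))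
        (.of_forall Ioc_subset_Ioi_self)
    linarith
  -- a positive constant below an integrable function on a half-line is impossible
  have hconst : IntegrableOn (fun _ => h a - ∫ x in Ioi a, k x) (Ioi a) :=
    hh.mono' aestronglyMeasurable_const ((ae_restrict_iff' measurableSet_Ioi).2 (.of_forall
      fun R hR => (Real.norm_of_nonneg (sub_nonneg.2 hlt.le)).trans_le (hbound R hR)))
  simp [integrableOn_const_iff, sub_eq_zero, hlt.ne'] at hconst

theorem pow_mul_sq_le_integral_Ioi {g g' φ : ℝ → ℝ} {a : ℝ} (d : ℕ) (ha : 0 ≤ a)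
    (hg : ∀ s, HasDerivAt g (g' s) s) (hg' : ∀ s, |g' s| ≤ φ s)
    (hg2 : IntegrableOn (fun s => s ^ d * g s ^ 2) (Ioi a))
    (hgφ : IntegrableOn (fun s => s ^ d * (|g s| * φ s)) (Ioi a)) :
    a ^ d * g a ^ 2 ≤ 2 * ∫ s in Ioi a, s ^ d * (|g s| * φ s) := by
  have hderiv : ∀ s, HasDerivAt (fun s => s ^ d * g s ^ 2)
      (d * s ^ (d - 1) * g s ^ 2 + s ^ d * (2 * g s * g' s)) s := fun s =>
    ((hasDerivAt_pow d s).fun_mul ((hg s).fun_pow 2)).congr_deriv (by norm_num)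
  rw [← integral_const_mul]
  refine le_integral_Ioi_of_neg_le_deriv (fun s _ => (hderiv s).continuousAt.continuousWithinAt)
    (fun s _ => hderiv s) (fun s hs => ?_) (fun s hs => ?_) hg2 (hgφ.const_mul 2)
  · have hs0 : 0 ≤ s := ha.trans hs.le
    have hprod : -(|g s| * φ s) ≤ g s * g' s := calc
      -(|g s| * φ s) ≤ -|g s * g' s| := by
        rw [abs_mul]; exact neg_le_neg (mul_le_mul_of_nonneg_left (hg' s) (abs_nonneg _))
      _ ≤ g s * g' s := neg_abs_le _
    have := mul_le_mul_of_nonneg_left hprod (pow_nonneg hs0 d)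
    have : 0 ≤ d * s ^ (d - 1) * g s ^ 2 := by positivity
    linarith
  · have := (abs_nonneg _).trans (hg' s)
    have := pow_nonneg (ha.trans hs.le) d
    positivity

section Radial

variable {E : Type*} [NormedAddCommGroup E] [InnerProductSpace ℝ E] [CompleteSpace E]

theorem norm_gradient_eq_of_radial {f : E → ℝ} (hrad : ∀ x y : E, ‖x‖ = ‖y‖ → f x = f y)
    {x y : E} (h : ‖x‖ = ‖y‖) : ‖gradient f x‖ = ‖gradient f y‖ := by
  -- the reflection exchanging `x` and `y` preserves `f`, hence intertwines its derivatives
  set Q := (Submodule.span ℝ {x - y})ᗮ.reflection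
  have hfQ : f ∘ Q.toContinuousLinearEquiv = f := funext fun z => hrad _ _ (Q.norm_map z)
  have hderiv : fderiv ℝ f x = (fderiv ℝ f y).comp Q.toLinearIsometry.toContinuousLinearMap := by
    rw [← hfQ, Q.toContinuousLinearEquiv.comp_right_fderiv, hfQ]
    exact congr_arg (fun z => (fderiv ℝ f z).comp _) (Submodule.reflection_sub h)
  simp only [gradient, LinearIsometryEquiv.norm_map, hderiv]
  exact ContinuousLinearMap.opNorm_comp_linearIsometryEquiv _ Q

theorem abs_fderiv_apply_le_norm_gradient (f : E → ℝ) (x v : E) :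
    |fderiv ℝ f x v| ≤ ‖gradient f x‖ * ‖v‖ := by
  rw [← InnerProductSpace.toDual_symm_apply]
  exact abs_real_inner_le_norm _ _

variable [FiniteDimensional ℝ E] [MeasurableSpace E] [BorelSpace E] [Nontrivial E]
  (μ : Measure E) [μ.IsAddHaarMeasure]

theorem norm_pow_mul_sq_le_integral_norm_mul_norm_gradient {f : E → ℝ}
    (hrad : ∀ x y : E, ‖x‖ = ‖y‖ → f x = f y) (hf : Differentiable ℝ f)
    (hf2 : Integrable (fun y => f y ^ 2) μ)
    (hfg : Integrable (fun y => ‖f y‖ * ‖gradient f y‖) μ) (x : E) :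
    finrank ℝ E * μ.real (ball 0 1) * (‖x‖ ^ (finrank ℝ E - 1) * f x ^ 2)
      ≤ 2 * ∫ y, ‖f y‖ * ‖gradient f y‖ ∂μ := by
  obtain ⟨e, he⟩ := exists_norm_eq E zero_le_one
  have hnorm : ∀ r : ℝ, 0 ≤ r → ‖r • e‖ = r := fun r hr => by
    rw [norm_smul, he, mul_one, Real.norm_of_nonneg hr]
  set g : ℝ → ℝ := fun r => f (r • e)
  set φ : ℝ → ℝ := fun r => ‖gradient f (r • e)‖
  have hfg_eq : ∀ y, f y = g ‖y‖ := fun y => hrad _ _ (hnorm _ (norm_nonneg y)).symm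
  have hφ_eq : ∀ y, ‖gradient f y‖ = φ ‖y‖ := fun y =>
    norm_gradient_eq_of_radial hrad (hnorm _ (norm_nonneg y)).symm
  have hg : ∀ r, HasDerivAt g (fderiv ℝ f (r • e) e) r := fun r =>
    (hf (r • e)).hasFDerivAt.comp_hasDerivAt r (by simpa using (hasDerivAt_id r).smul_const e)
  have hg' : ∀ r, |fderiv ℝ f (r • e) e| ≤ φ r := fun r => by
    simpa [he] using abs_fderiv_apply_le_norm_gradient f (r • e) e
  have hpolar2 : IntegrableOn (fun s => s ^ (finrank ℝ E - 1) * g s ^ 2) (Ioi 0) := by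
    simpa using (integrable_fun_norm_addHaar μ (f := fun s => g s ^ 2)).1
      (by simpa only [hfg_eq] using hf2)
  have hpolar : IntegrableOn (fun s => s ^ (finrank ℝ E - 1) * (|g s| * φ s)) (Ioi 0) := by
    simpa using (integrable_fun_norm_addHaar μ (f := fun s => |g s| * φ s)).1
      (by simpa only [Real.norm_eq_abs, hfg_eq, hφ_eq] using hfg)
  have hintegral : ∫ y, ‖f y‖ * ‖gradient f y‖ ∂μ = finrank ℝ E * μ.real (ball 0 1) *
      ∫ s in Ioi 0, s ^ (finrank ℝ E - 1) * (|g s| * φ s) := by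
    simp only [Real.norm_eq_abs, hfg_eq, hφ_eq]
    rw [integral_fun_norm_addHaar μ (fun s => |g s| * φ s)]
    simp [mul_assoc]
  have hx0 := norm_nonneg x
  have hmono : ∫ s in Ioi ‖x‖, s ^ (finrank ℝ E - 1) * (|g s| * φ s)
      ≤ ∫ s in Ioi 0, s ^ (finrank ℝ E - 1) * (|g s| * φ s) := by
    refine setIntegral_mono_set hpolar ((ae_restrict_iff' measurableSet_Ioi).2 (.of_forall
      fun s hs => ?_)) (.of_forall (Ioi_subset_Ioi hx0))
    have := (abs_nonneg _).trans (hg' s)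
    have := pow_nonneg (mem_Ioi.1 hs).le (finrank ℝ E - 1)
    positivity
  have hstrauss := pow_mul_sq_le_integral_Ioi (finrank ℝ E - 1) hx0 hg hg'
    (hpolar2.mono_set (Ioi_subset_Ioi hx0)) (hpolar.mono_set (Ioi_subset_Ioi hx0))
  rw [hintegral, hfg_eq x, mul_left_comm 2]
  exact mul_le_mul_of_nonneg_left (hstrauss.trans (by linarith)) (by positivity)

end Radial

theorem integral_norm_mul_norm_le_eLpNorm_two {α F G : Type*} [MeasurableSpace α] {μ : Measure α}
    [NormedAddCommGroup F] [NormedAddCommGroup G] {f : α → F} {g : α → G}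
    (hf : MemLp f 2 μ) (hg : MemLp g 2 μ) :
    ∫ a, ‖f a‖ * ‖g a‖ ∂μ ≤ (eLpNorm f 2 μ).toReal * (eLpNorm g 2 μ).toReal := by
  have hHolder := integral_mul_norm_le_Lp_mul_Lq Real.HolderConjugate.two_two
    (f := fun a => ‖f a‖) (g := fun a => ‖g a‖) (by simpa using hf.norm) (by simpa using hg.norm)
  rw [hf.eLpNorm_eq_integral_rpow_norm two_ne_zero ENNReal.ofNat_ne_top,
    hg.eLpNorm_eq_integral_rpow_norm two_ne_zero ENNReal.ofNat_ne_top,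
    ENNReal.toReal_ofReal (by positivity), ENNReal.toReal_ofReal (by positivity)]
  simpa using hHolder

/-- (Strauss) Radial Sobolev embedding: for N ≥ 2 there is C = C(N) such that for all
radial f ∈ H¹(ℝᴺ) and x ≠ 0, |x|^{(N-1)/2}|f(x)| ≤ C‖∇f‖^{1/2}_{L²}‖f‖^{1/2}_{L²}. -/
theorem radial_sobolev_embedding (N : ℕ) (hN : 2 ≤ N) :
    ∃ C > (0 : ℝ), ∀ f : EuclideanSpace ℝ (Fin N) → ℝ,
      (∀ x y, ‖x‖ = ‖y‖ → f x = f y) →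
      ContDiff ℝ 1 f →
      MemLp f 2 volume → MemLp (gradient f) 2 volume →
      ∀ x : EuclideanSpace ℝ (Fin N), x ≠ 0 →
        ‖x‖ ^ (((N : ℝ) - 1) / 2) * |f x|
          ≤ C * (eLpNorm (gradient f) 2 volume).toReal ^ ((1 : ℝ) / 2)
              * (eLpNorm f 2 volume).toReal ^ ((1 : ℝ) / 2) := by
  have : NeZero N := ⟨by omega⟩
  set c := N * volume.real (ball (0 : EuclideanSpace ℝ (Fin N)) 1)
  have hc : 0 < c := mul_pos (by positivity)
    (ENNReal.toReal_pos (measure_ball_pos _ _ one_pos).ne' measure_ball_lt_top.ne)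
  refine ⟨√(2 / c), by positivity, fun f hrad hf hmf hmg x _ => ?_⟩
  have hbound := norm_pow_mul_sq_le_integral_norm_mul_norm_gradient volume hrad
    (hf.differentiable one_ne_zero) hmf.integrable_sq (hmf.norm.integrable_mul hmg.norm) x
  rw [finrank_euclideanSpace_fin] at hbound
  have hHolder := integral_norm_mul_norm_le_eLpNorm_two hmf hmg
  have hexp : ((N : ℝ) - 1) / 2 * (2 : ℕ) = (N - 1 : ℕ) := by
    rw [Nat.cast_sub (by omega)]; push_cast; ring
  rw [← sq_le_sq₀ (by positivity) (by positivity), mul_pow, mul_pow, mul_pow,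
    ← Real.rpow_natCast _ 2, ← Real.rpow_mul (norm_nonneg x), hexp, Real.rpow_natCast, sq_abs,
    ← Real.sqrt_eq_rpow, ← Real.sqrt_eq_rpow, Real.sq_sqrt (by positivity),
    Real.sq_sqrt ENNReal.toReal_nonneg, Real.sq_sqrt ENNReal.toReal_nonneg,
    div_mul_eq_mul_div, div_mul_eq_mul_div, le_div_iff₀ hc, mul_comm]
  linarith
end

section
/- (ODE blow-up lemma) Let t₀ ∈ ℝ, A > 0, and let M : [t₀,∞) → ℝ be continuously differentiable with M(t) ≤ -A ∫_{t₀}^t |M(s)|⁴ ds for all t ≥ t₀, and suppose M(t₁) < 0 for some t₁ > t₀. Then M cannot be defined (finite) on all of [t₀,∞); more precisely, M(t) → -∞ as t approaches a finite time t* ≤ t₁ + 1/(3A⁴ z(t₁)³), where z(t) = ∫_{t₀}^t |M(s)|⁴ ds. -/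
/-!
Put `z(t) = ∫_{t₀}^t |M|⁴`. Since `M ≤ -A z ≤ 0`, we get `z' = |M|⁴ ≥ A⁴ z⁴`, and `z > 0` from `t₁`
on because `M(t₁) ≠ 0`. Comparing with the explicit solution of `y' = A⁴ y⁴`, the function
`z⁻³ + 3A⁴ t` is nonincreasing on `[t₁, ∞)`, so the positive quantity `z(t)⁻³` would be `≤ 0`
at `t = t₁ + 1/(3A⁴ z(t₁)³)`.
-/

open MeasureTheory intervalIntegral Set

theorem inv_pow_add_mul_le_of_pow_succ_le_deriv {z z' : ℝ → ℝ} {a k t : ℝ} {n : ℕ}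
    (hz : ContinuousOn z (Ici a)) (hderiv : ∀ s ∈ Ioi a, HasDerivAt z (z' s) s)
    (hpos : ∀ s ∈ Ici a, 0 < z s) (hgrowth : ∀ s ∈ Ioi a, k * z s ^ (n + 1) ≤ z' s)
    (ht : a ≤ t) :
    (z t ^ n)⁻¹ + n * k * (t - a) ≤ (z a ^ n)⁻¹ := by
  set w : ℝ → ℝ := fun s => (z s ^ n)⁻¹ + n * k * s
  have hw_deriv : ∀ s ∈ Ioi a,
      HasDerivAt w (-(n * z s ^ (n - 1) * z' s) / (z s ^ n) ^ 2 + n * k) s := fun s hs =>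
    (((hderiv s hs).fun_pow n).fun_inv (pow_pos (hpos s (mem_Ici_of_Ioi hs)) n).ne').add
      ((hasDerivAt_id s).const_mul _ |>.congr_deriv (mul_one _))
  have hw_deriv_nonpos : ∀ s ∈ Ioi a,
      -(n * z s ^ (n - 1) * z' s) / (z s ^ n) ^ 2 + n * k ≤ 0 := by
    intro s hs
    have hzs := hpos s (mem_Ici_of_Ioi hs)
    rcases n with _ | m
    · simp
    · have hcmp : (m + 1) * k * (z s ^ (m + 1)) ^ 2 ≤ (m + 1) * z s ^ m * z' s :=
        calc (m + 1) * k * (z s ^ (m + 1)) ^ 2 = (m + 1) * z s ^ m * (k * z s ^ (m + 1 + 1)) := by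
              ring
          _ ≤ (m + 1) * z s ^ m * z' s := by gcongr; exact hgrowth s hs
      rw [div_add' _ _ _ (by positivity), div_nonpos_iff]
      push_cast
      exact Or.inr ⟨by linarith, by positivity⟩
  have hw_cont : ContinuousOn w (Ici a) :=
    (hz.pow n).inv₀ (fun s hs => (pow_pos (hpos s hs) n).ne') |>.add (by fun_prop)
  have hw_anti : AntitoneOn w (Ici a) :=
    antitoneOn_of_hasDerivWithinAt_nonpos (convex_Ici a) hw_cont
      (fun s hs => (hw_deriv s (by rwa [interior_Ici] at hs)).hasDerivWithinAt)
      (fun s hs => hw_deriv_nonpos s (by rwa [interior_Ici] at hs))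
  have hwt := hw_anti self_mem_Ici ht ht
  simp only [w] at hwt
  linarith

theorem false_of_pow_succ_le_deriv {z z' : ℝ → ℝ} {a k : ℝ} {n : ℕ} (hk : 0 < k) (hn : n ≠ 0)
    (hz : ContinuousOn z (Ici a)) (hderiv : ∀ s ∈ Ioi a, HasDerivAt z (z' s) s)
    (hpos : ∀ s ∈ Ici a, 0 < z s) (hgrowth : ∀ s ∈ Ioi a, k * z s ^ (n + 1) ≤ z' s) :
    False := by
  have hnk : (0 : ℝ) < n * k := by positivity
  have hza := hpos a self_mem_Ici
  set T := a + (z a ^ n)⁻¹ / (n * k)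
  have hT : a ≤ T := le_add_of_nonneg_right (by positivity)
  have hbound := inv_pow_add_mul_le_of_pow_succ_le_deriv hz hderiv hpos hgrowth hT
  rw [show T - a = (z a ^ n)⁻¹ / (n * k) by ring, mul_div_cancel₀ _ hnk.ne'] at hbound
  have hzT : 0 < (z T ^ n)⁻¹ := inv_pos.mpr (pow_pos (hpos T hT) n)
  linarith

theorem ode_blowup_lemma_general (t₀ t₁ A : ℝ) (M : ℝ → ℝ) (hA : 0 < A)
    (hdiff : ∀ t ∈ Set.Ici t₀, DifferentiableAt ℝ M t)
    (hineq : ∀ t ∈ Set.Ici t₀, M t ≤ -A * ∫ s in t₀..t, |M s| ^ 4)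
    (ht₁ : t₀ < t₁) (hneg : M t₁ < 0) : False := by
  set z : ℝ → ℝ := fun t => ∫ s in t₀..t, |M s| ^ 4
  have hcont : ContinuousOn (fun s => |M s| ^ 4) (Ici t₀) := fun t ht =>
    ((hdiff t ht).continuousAt.abs.pow 4).continuousWithinAt
  have hz_deriv : ∀ t ∈ Ioi t₀, HasDerivAt z (|M t| ^ 4) t := fun t ht =>
    integral_hasDerivAt_right
      (ContinuousOn.intervalIntegrable_of_Icc ht.le (hcont.mono Icc_subset_Ici_self))
      ((hcont.mono Ioi_subset_Ici_self).stronglyMeasurableAtFilter isOpen_Ioi t ht)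
      (hcont.continuousAt (Ici_mem_nhds ht))
  have hz_pos : ∀ t ∈ Ici t₁, 0 < z t := fun t ht =>
    integral_pos (ht₁.trans_le ht) (hcont.mono Icc_subset_Ici_self) (fun _ _ => by positivity)
      ⟨t₁, ⟨ht₁.le, ht⟩, pow_pos (abs_pos.mpr hneg.ne) 4⟩
  have hgrowth : ∀ t ∈ Ioi t₁, A ^ 4 * z t ^ 4 ≤ |M t| ^ 4 := fun t ht => by
    have hAz : 0 ≤ A * z t := mul_nonneg hA.le (hz_pos t (mem_Ici_of_Ioi ht)).le
    have hM : A * z t ≤ |M t| := by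
      linarith [neg_abs_le (M t), hineq t (ht₁.trans ht).le]
    simpa only [mul_pow] using pow_le_pow_left₀ hAz hM 4
  exact false_of_pow_succ_le_deriv (n := 3) (by positivity) three_ne_zero
    (fun t ht => (hz_deriv t (ht₁.trans_le ht)).continuousAt.continuousWithinAt)
    (fun t ht => hz_deriv t (ht₁.trans ht)) hz_pos hgrowth

/-- ODE blow-up lemma of Boulenger–Lenzmann: there is no continuously differentiable
function M on [t₀,∞) with M(t) ≤ -A∫_{t₀}^t |M(s)|⁴ ds for all t ≥ t₀ and M(t₁) < 0
at some t₁ > t₀; i.e. such an M cannot be defined (finite) on all of [t₀,∞). -/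
theorem ode_blowup_lemma (t₀ t₁ A : ℝ) (M : ℝ → ℝ) (hA : 0 < A)
    (hdiff : ∀ t ∈ Set.Ici t₀, DifferentiableAt ℝ M t)
    (hderiv : ContinuousOn (deriv M) (Set.Ici t₀))
    (hineq : ∀ t ∈ Set.Ici t₀, M t ≤ -A * ∫ s in t₀..t, |M s| ^ 4)
    (ht₁ : t₀ < t₁) (hneg : M t₁ < 0) : False :=
  ode_blowup_lemma_general t₀ t₁ A M hA hdiff hineq ht₁ hneg
end

section
/- Let N ≥ 1, μ ≥ 0, Nα > 8, σ_c = (8-(N-4)α)/(Nα-8). Suppose u ∈ H²(ℝᴺ) satisfies E_μ(u)·M(u)^{σ_c} ≤ (1-θ)·((Nα-8)/(2Nα))·(‖ΔQ‖_{L²}‖Q‖^{σ_c}_{L²})² for some θ ∈ (0,1) and ‖Δu‖_{L²}‖u‖^{σ_c}_{L²} > ‖ΔQ‖_{L²}‖Q‖^{σ_c}_{L²}. Then K_μ(u) := ‖Δu‖²_{L²} + (μ/2)‖∇u‖²_{L²} - (Nα/(4(α+2)))‖u‖^{α+2}_{L^{α+2}} ≤ -((Nα-8)θ/8)·‖ΔQ‖²_{L²}·(M(Q)/M(u))^{σ_c}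 < 0. -/
set_option maxHeartbeats 1000000

lemma sq_rpow_aux (x : ℝ) (hx : 0 < x) (s : ℝ) : (x ^ 2) ^ s = (x ^ s) ^ 2 := by
  rw [← Real.rpow_natCast x 2, ← Real.rpow_natCast (x ^ s) 2,
    ← Real.rpow_mul hx.le, ← Real.rpow_mul hx.le, mul_comm]

/-- Negativity of K_μ below the ground state threshold with gradient condition reversed.
Here `du` denotes ‖Δu‖_{L²}, `gu` denotes ‖∇u‖_{L²}, `u2` denotes ‖u‖_{L²},
`p` denotes ‖u‖_{L^{α+2}}^{α+2}, `dQ` denotes ‖ΔQ‖_{L²}, `Q2` denotes ‖Q‖_{L²}. -/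
theorem K_mu_negative (N : ℕ) (μ α σc θ du gu u2 p dQ Q2 : ℝ)
    (hN : 1 ≤ N) (hμ : 0 ≤ μ) (h8 : 8 < (N : ℝ) * α)
    (hσ : σc = (8 - ((N : ℝ) - 4) * α) / ((N : ℝ) * α - 8))
    (hθ : θ ∈ Set.Ioo (0 : ℝ) 1)
    (hdu : 0 ≤ du) (hgu : 0 ≤ gu) (hu2 : 0 < u2) (hp : 0 ≤ p)
    (hdQ : 0 < dQ) (hQ2 : 0 < Q2)
    (hE : (1 / 2 * du ^ 2 + μ / 2 * gu ^ 2 - 1 / (α + 2) * p) * (u2 ^ 2) ^ σc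
        ≤ (1 - θ) * (((N : ℝ) * α - 8) / (2 * (N : ℝ) * α)) * (dQ * Q2 ^ σc) ^ 2)
    (hgrad : dQ * Q2 ^ σc < du * u2 ^ σc) :
    du ^ 2 + μ / 2 * gu ^ 2 - ((N : ℝ) * α / (4 * (α + 2))) * p
      ≤ -(((N : ℝ) * α - 8) * θ / 8) * dQ ^ 2 * (Q2 ^ 2 / u2 ^ 2) ^ σc ∧
    -(((N : ℝ) * α - 8) * θ / 8) * dQ ^ 2 * (Q2 ^ 2 / u2 ^ 2) ^ σc < 0 := by
  have hN1 : (1 : ℝ) ≤ N := by exact_mod_cast hN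
  have hα : 0 < α := by nlinarith
  have hα2 : (0 : ℝ) < α + 2 := by linarith
  set a : ℝ := u2 ^ σc with ha_def
  set b : ℝ := Q2 ^ σc with hb_def
  have ha : 0 < a := Real.rpow_pos_of_pos hu2 σc
  have hb : 0 < b := Real.rpow_pos_of_pos hQ2 σc
  have hra : (u2 ^ 2) ^ σc = a ^ 2 := sq_rpow_aux u2 hu2 σc
  have hrb : (Q2 ^ 2) ^ σc = b ^ 2 := sq_rpow_aux Q2 hQ2 σc
  have hrdiv : (Q2 ^ 2 / u2 ^ 2) ^ σc = b ^ 2 / a ^ 2 := by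
    rw [Real.div_rpow (by positivity) (by positivity), hra, hrb]
  rw [hra] at hE
  -- q := p / (α+2)
  set q : ℝ := p / (α + 2) with hq_def
  have hq : 0 ≤ q := by positivity
  have hE1 : (1 / 2 * du ^ 2 + μ / 2 * gu ^ 2 - q) * a ^ 2
      ≤ (1 - θ) * (((N : ℝ) * α - 8) / (2 * (N : ℝ) * α)) * (dQ * b) ^ 2 := by
    have : 1 / (α + 2) * p = q := by rw [hq_def]; ring
    rw [← this]; exact hE
  have hNα : (0 : ℝ) < (N : ℝ) * α := by linarith
  have h1 : ((N : ℝ) * α) * ((1 / 2 * du ^ 2 + μ / 2 * gu ^ 2 - q) * a ^ 2)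
      ≤ ((N : ℝ) * α) * ((1 - θ) * (((N : ℝ) * α - 8) / (2 * (N : ℝ) * α)) * (dQ * b) ^ 2) :=
    mul_le_mul_of_nonneg_left hE1 hNα.le
  have h2 : ((N : ℝ) * α) * ((1 - θ) * (((N : ℝ) * α - 8) / (2 * (N : ℝ) * α)) * (dQ * b) ^ 2)
      = (1 - θ) * ((N : ℝ) * α - 8) / 2 * (dQ * b) ^ 2 := by
    field_simp
  rw [h2] at h1
  have hB2 : (dQ * b) ^ 2 < (du * a) ^ 2 := by
    have hBpos : 0 < dQ * b := mul_pos hdQ hb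
    nlinarith
  have h3 : ((N : ℝ) * α - 8) * (dQ * b) ^ 2 ≤ ((N : ℝ) * α - 8) * (du * a) ^ 2 :=
    mul_le_mul_of_nonneg_left hB2.le (by linarith)
  have h4 : 0 ≤ ((N : ℝ) * α - 4) * μ * (gu * a) ^ 2 := by
    apply mul_nonneg (mul_nonneg (by linarith) hμ) (sq_nonneg _)
  have key : (du ^ 2 + μ / 2 * gu ^ 2 - ((N : ℝ) * α / 4) * q) * a ^ 2
      ≤ -(((N : ℝ) * α - 8) * θ / 8) * (dQ * b) ^ 2 := by linarith [h1, h3, h4]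
  have hgoalq : ((N : ℝ) * α / (4 * (α + 2))) * p = ((N : ℝ) * α / 4) * q := by
    rw [hq_def]; field_simp
  constructor
  · rw [hrdiv, hgoalq]
    rw [show -(((N : ℝ) * α - 8) * θ / 8) * dQ ^ 2 * (b ^ 2 / a ^ 2)
        = (-(((N : ℝ) * α - 8) * θ / 8) * (dQ * b) ^ 2) / a ^ 2 by ring]
    rw [le_div_iff₀ (by positivity)]
    linarith [key]
  · rw [hrdiv]
    have c1 : 0 < ((N : ℝ) * α - 8) * θ / 8 := by
      apply div_pos (mul_pos (by linarith) hθ.1) (by norm_num)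
    have : 0 < ((N : ℝ) * α - 8) * θ / 8 * dQ ^ 2 * (b ^ 2 / a ^ 2) := by positivity
    linarith
end

section
/- Let N ≥ 5 and suppose the sharp Sobolev inequality ‖f‖_{L^{2N/(N-4)}} ≤ C_opt‖Δf‖_{L²} holds with C_opt = ‖ΔW‖^{-4/N}_{L²}, where ‖ΔW‖²_{L²} = ‖W‖^{2N/(N-4)}_{L^{2N/(N-4)}}. If u ∈ H²(ℝᴺ) satisfies, for some μ ≥ 0 and θ ∈ (0,1), E_μ(u) ≤ (1-θ)·(2/N)‖ΔW‖²_{L²} and ‖Δu‖_{L²} > ‖ΔW‖_{L²}, then K_μ(u) := ‖Δu‖²_{L²} + (μ/2)‖∇u‖²_{L²} - ‖u‖^{2N/(N-4)}_{L^{2N/(N-4)}} satisfies K_μ(u) ≤ -(4θ/(N-4))‖ΔW‖²_{L²} < 0. -/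
/-- Negativity of K_μ in the energy-critical case. Here `a` denotes ‖Δu‖_{L²},
`g` denotes ‖∇u‖_{L²}, `p` denotes ‖u‖^{2N/(N-4)}_{L^{2N/(N-4)}}, and `dW` denotes
‖ΔW‖_{L²}; the sharp Sobolev inequality reads p^{(N-4)/(2N)} ≤ dW^{-4/N}·a. -/
theorem K_mu_negative_critical (N : ℕ) (μ θ a g p dW : ℝ) (hN : 5 ≤ N) (hμ : 0 ≤ μ)
    (hθ : θ ∈ Set.Ioo (0 : ℝ) 1) (ha : 0 ≤ a) (hg : 0 ≤ g) (hp : 0 ≤ p) (hdW : 0 < dW)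
    (hSob : p ^ (((N : ℝ) - 4) / (2 * (N : ℝ))) ≤ dW ^ (-(4 / (N : ℝ))) * a)
    (hE : 1 / 2 * a ^ 2 + μ / 2 * g ^ 2 - ((N : ℝ) - 4) / (2 * (N : ℝ)) * p
        ≤ (1 - θ) * (2 / (N : ℝ)) * dW ^ 2)
    (hgrad : dW < a) :
    a ^ 2 + μ / 2 * g ^ 2 - p ≤ -(4 * θ / ((N : ℝ) - 4)) * dW ^ 2 ∧
    -(4 * θ / ((N : ℝ) - 4)) * dW ^ 2 < 0 := by
  obtain ⟨hθ0, hθ1⟩ := hθ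
  have hn : (5:ℝ) ≤ (N:ℝ) := by exact_mod_cast hN
  have hn0 : (0:ℝ) < (N:ℝ) := by linarith
  have hd : (0:ℝ) < (N:ℝ) - 4 := by linarith
  -- multiply hE by 2N
  have hn0' : (N:ℝ) ≠ 0 := ne_of_gt hn0
  have hE' : (N:ℝ) * a ^ 2 + (N:ℝ) * μ * g ^ 2 - ((N:ℝ) - 4) * p
      ≤ 4 * (1 - θ) * dW ^ 2 := by
    have h := mul_le_mul_of_nonneg_left hE (by linarith : (0:ℝ) ≤ 2 * (N:ℝ))
    have e1 : 2 * (N:ℝ) * (1 / 2 * a ^ 2 + μ / 2 * g ^ 2 - ((N:ℝ) - 4) / (2 * (N:ℝ)) * p)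
        = (N:ℝ) * a ^ 2 + (N:ℝ) * μ * g ^ 2 - ((N:ℝ) - 4) * p := by
      field_simp
    have e2 : 2 * (N:ℝ) * ((1 - θ) * (2 / (N:ℝ)) * dW ^ 2) = 4 * (1 - θ) * dW ^ 2 := by
      field_simp
      ring
    rw [e1, e2] at h
    exact h
  have ha2 : dW ^ 2 < a ^ 2 := by nlinarith
  have hμg : 0 ≤ μ * g ^ 2 := mul_nonneg hμ (sq_nonneg g)
  constructor
  · have hrw : -(4 * θ / ((N:ℝ) - 4)) * dW ^ 2 = (-(4 * θ * dW ^ 2)) / ((N:ℝ) - 4) := by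
      ring
    rw [hrw, le_div_iff₀ hd]
    nlinarith [hμg, ha2]
  · have : 0 < 4 * θ / ((N:ℝ) - 4) * dW ^ 2 :=
      mul_pos (div_pos (by linarith) hd) (by positivity)
    linarith
end
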